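/- For every d ≥ 2, the tripartite generalized GHZ state satisfies X_d^{⊗3} |GHZ_{d,3}⟩ = |GHZ_{d,3}⟩ and (Z_d^{d−2} ⊗ Z_d ⊗ Z_d) |GHZ_{d,3}⟩ = |GHZ_{d,3}⟩, and consequently 𝒞₂(GHZ_{d,3}) = log₂ d, the maximal value, attained when every subsystem is measured in the eigenbasis of Z_d (the computational basis) in one round and the eigenbasis of X_d (the Fourier basis) in the other. -/

import Mathlib

open scoped BigOperators ComplexOrder

namespace Paper

noncomputable section

/-- Base-2 Shannon entropy of a finitely indexed probability vector. -/
def shannon {α : Type*} [Fintype α] (p : α → ℝ) : ℝ :=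
  ∑ a, -(p a * Real.logb 2 (p a))

/-- Joint outcome type for `n` subsystems of local dimension `d`. -/
abbrev Idx (n d : ℕ) := Fin n → Fin d

/-- The projector `|ψ⟩⟨ψ|`. -/
def proj {α : Type*} (ψ : α → ℂ) : Matrix α α ℂ :=
  Matrix.of fun x y => ψ x * (starRingEnd ℂ) (ψ y)

/-- A density operator: positive semidefinite with trace one. -/
def IsDensityOp {α : Type*} [Fintype α] [DecidableEq α] (ρ : Matrix α α ℂ) : Prop :=
  ρ.PosSemidef ∧ ρ.trace = 1

/-- `B` is an orthonormal basis of `ℂ^d` (`B i` is the `i`-th basis vector). -/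
def IsONB {d : ℕ} (B : Fin d → Fin d → ℂ) : Prop :=
  ∀ i j, (∑ x, (starRingEnd ℂ) (B i x) * B j x) = if i = j then 1 else 0

/-- Two bases of `ℂ^d` are mutually unbiased. -/
def MutUnbiased {d : ℕ} (B B' : Fin d → Fin d → ℂ) : Prop :=
  ∀ i j, ‖∑ x, (starRingEnd ℂ) (B i x) * B' j x‖ ^ 2 = 1 / d

/-- Joint outcome distribution of measuring the orthonormal basis `B l` on each factor `l`. -/
def jointProb {n d : ℕ} (ρ : Matrix (Idx n d) (Idx n d) ℂ)
    (B : Fin n → Fin d → Fin d → ℂ) (i : Idx n d) : ℝ :=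
  (∑ x : Idx n d, ∑ y : Idx n d,
    (∏ l, (starRingEnd ℂ) (B l (i l) (x l))) * ρ x y * (∏ l, B l (i l) (y l))).re

/-- Marginal distribution of subsystem `l`. -/
def margAt {n d : ℕ} (p : Idx n d → ℝ) (l : Fin n) (i : Fin d) : ℝ :=
  ∑ x : Idx n d, if x l = i then p x else 0

/-- Insert outcome `i` at position `l` into a tuple of outcomes of the other subsystems. -/
def insertAt {n d : ℕ} (l : Fin n) (i : Fin d) (g : {m : Fin n // m ≠ l} → Fin d) : Idx n d :=
  fun m => if h : m = l then i else g ⟨m, h⟩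

/-- Marginal distribution of all subsystems except `l`. -/
def margRest {n d : ℕ} (p : Idx n d → ℝ) (l : Fin n)
    (g : {m : Fin n // m ≠ l} → Fin d) : ℝ :=
  ∑ i : Fin d, p (insertAt l i g)

/-- Mutual information `I(B⁽ˡ⁾ : B⁽ˡ̄⁾)` between the outcome at subsystem `l` and the
outcomes at the remaining subsystems, for the joint outcome distribution `p`. -/
def mutualInfo {n d : ℕ} (p : Idx n d → ℝ) (l : Fin n) : ℝ :=
  shannon (margAt p l) + shannon (margRest p l) - shannon p

/-- The correlation function `C_N(ρ, {B_k^{(l)}})`. -/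
def CNval {n d : ℕ} (N : ℕ) (ρ : Matrix (Idx n d) (Idx n d) ℂ)
    (B : Fin N → Fin n → Fin d → Fin d → ℂ) : ℝ :=
  (1 / (n * N)) * ∑ k, ∑ l, mutualInfo (jointProb ρ (B k)) l

/-- `B k l` is, for each subsystem `l`, a family of `N` pairwise mutually unbiased
orthonormal bases (indexed by `k`). -/
def ValidMUBs {n d : ℕ} (N : ℕ) (B : Fin N → Fin n → Fin d → Fin d → ℂ) : Prop :=
  (∀ k l, IsONB (B k l)) ∧ ∀ l k k', k ≠ k' → MutUnbiased (B k l) (B k' l)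

/-- The set of values `C_N(ρ, ·)` over all admissible choices of MUBs;
`𝒞_N(ρ)` is the supremum of this set. -/
def CNvalues {n d : ℕ} (N : ℕ) (ρ : Matrix (Idx n d) (Idx n d) ℂ) : Set ℝ :=
  {x | ∃ B : Fin N → Fin n → Fin d → Fin d → ℂ, ValidMUBs N B ∧ x = CNval N ρ B}

/-- Single-subsystem reduced state `tr_{l̄} ρ`. -/
def reducedAt {n d : ℕ} (ρ : Matrix (Idx n d) (Idx n d) ℂ) (l : Fin n) :
    Matrix (Fin d) (Fin d) ℂ :=
  Matrix.of fun i j =>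
    ∑ g : {m : Fin n // m ≠ l} → Fin d, ρ (insertAt l i g) (insertAt l j g)

/-- `ω_d = exp(2πi/d)`. -/
def ω (d : ℕ) : ℂ := Complex.exp (2 * Real.pi * Complex.I / d)

/-- The generalized Pauli operator `X_d`. -/
def Xmat (d : ℕ) : Matrix (Fin d) (Fin d) ℂ :=
  Matrix.of fun i j => if (i : ℕ) = ((j : ℕ) + 1) % d then 1 else 0

/-- The generalized Pauli operator `Z_d`. -/
def Zmat (d : ℕ) : Matrix (Fin d) (Fin d) ℂ :=
  Matrix.of fun i j => if i = j then ω d ^ (i : ℕ) else 0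

/-- The generalized Pauli operator `S_{d,(k₁,k₂)} = X_d^{k₁} Z_d^{k₂}`. -/
def Smat (d : ℕ) (k : Fin d × Fin d) : Matrix (Fin d) (Fin d) ℂ :=
  Xmat d ^ (k.1 : ℕ) * Zmat d ^ (k.2 : ℕ)

/-- Apply a local operator `A l` to each tensor factor of a multipartite vector `ψ`,
i.e. the vector `(⊗_l A l) ψ`. -/
def applyLocal {n d : ℕ} (A : Fin n → Matrix (Fin d) (Fin d) ℂ) (ψ : Idx n d → ℂ) :
    Idx n d → ℂ :=
  fun x => ∑ y : Idx n d, (∏ l, A l (x l) (y l)) * ψ y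

/-- The computational (standard) basis of `ℂ^d`, the eigenbasis of `Z_d`. -/
def stdBasis (d : ℕ) : Fin d → Fin d → ℂ :=
  fun i x => if x = i then 1 else 0

/-- The Fourier basis of `ℂ^d`, the eigenbasis of `X_d`. -/
def fourierBasis (d : ℕ) : Fin d → Fin d → ℂ :=
  fun i x => (((Real.sqrt d)⁻¹ : ℝ) : ℂ) * ω d ^ ((i : ℕ) * (x : ℕ))

/-- The `n`-fold tensor product `⊗_l A l` as a matrix on the joint system. -/
def tensorN {n d : ℕ} (A : Fin n → Matrix (Fin d) (Fin d) ℂ) :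
    Matrix (Idx n d) (Idx n d) ℂ :=
  Matrix.of fun x y => ∏ l, A l (x l) (y l)

/-- Full separability of an `n`-partite density operator. -/
def FullySep {n d : ℕ} (ρ : Matrix (Idx n d) (Idx n d) ℂ) : Prop :=
  ∃ (J : ℕ) (p : Fin J → ℝ) (σ : Fin J → Fin n → Matrix (Fin d) (Fin d) ℂ),
    (∀ j, 0 ≤ p j) ∧ (∑ j, p j) = 1 ∧ (∀ j l, IsDensityOp (σ j l)) ∧
    ρ = ∑ j, p j • tensorN (σ j)

/-- generalized GHZ state `(1/√d) ∑_i |i⟩^{⊗n}`. -/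
def GHZvec (d n : ℕ) : Idx n d → ℂ :=
  fun x => if ∀ l l', x l = x l' then (((Real.sqrt d)⁻¹ : ℝ) : ℂ) else 0

/-!
Both invariances are direct: `X_d^{⊗3}` shifts every outcome tuple by one, which permutes the
constant tuples, and `Z_d^{d-2} ⊗ Z_d ⊗ Z_d` multiplies `|iii⟩` by `ω^{i d} = 1`.

Each mutual information `H(l) + H(l̄) - H(joint)` is at most `log d`: the marginal at `l` has
at most `d` outcomes, and coarse-graining the joint distribution to the other subsystems does not
increase entropy. Equality holds as soon as the marginal at `l` is uniform and the outcome at `l`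
is determined by the others, for then `H(l̄) = H(joint)`. For the GHZ state this happens in the
computational basis, where all outcomes agree, and in the Fourier basis, where the outcomes sum
to `0 mod d`.
-/

open Finset Real
open scoped Matrix

variable {n d : ℕ}

section Entropy

variable {α : Type*} [Fintype α]

lemma shannon_eq_sum_negMulLog (p : α → ℝ) :
    shannon p = (∑ a, negMulLog (p a)) / log 2 := by
  simp only [shannon, negMulLog_eq_neg, logb, sum_div, neg_div, mul_div_assoc]

lemma shannon_le_logb_card (p : α → ℝ) (hp : ∀ a, 0 ≤ p a) (hsum : ∑ a, p a = 1) :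
    shannon p ≤ logb 2 (Fintype.card α) := by
  set c : ℝ := (Fintype.card α : ℝ)
  have hc : c ≠ 0 := by
    rintro hc
    simp_all [c, Fintype.card_eq_zero_iff, univ_eq_empty]
  have jensen := concaveOn_negMulLog.le_map_sum (t := univ) (w := fun _ => c⁻¹) (p := p)
    (fun _ _ => by positivity) (by simp [c, hc]) (fun a _ => hp a)
  simp only [smul_eq_mul, ← mul_sum, hsum, mul_one] at jensen
  rw [shannon_eq_sum_negMulLog, logb]
  gcongr
  calc ∑ a, negMulLog (p a) = c * (c⁻¹ * ∑ a, negMulLog (p a)) := by field_simp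
    _ ≤ c * negMulLog c⁻¹ := by gcongr
    _ = log c := by simp [negMulLog, log_inv, hc]

lemma shannon_const_inv_card :
    shannon (fun _ : α => ((Fintype.card α : ℝ))⁻¹) = logb 2 (Fintype.card α) := by
  rcases eq_or_ne (Fintype.card α : ℝ) 0 with hc | hc
  · simp [shannon, hc]
  · simp [shannon, logb_inv, hc]

lemma negMulLog_sum_le {ι : Type*} (s : Finset ι) (f : ι → ℝ) (hf : ∀ i ∈ s, 0 ≤ f i) :
    negMulLog (∑ i ∈ s, f i) ≤ ∑ i ∈ s, negMulLog (f i) := by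
  calc negMulLog (∑ i ∈ s, f i) = ∑ i ∈ s, -(f i * log (∑ j ∈ s, f j)) := by
        simp only [negMulLog, sum_neg_distrib, ← sum_mul, neg_mul]
    _ ≤ ∑ i ∈ s, negMulLog (f i) := by
        refine sum_le_sum fun i hi => ?_
        rcases (hf i hi).eq_or_lt with h | h
        · simp [← h]
        · have := log_le_log h (single_le_sum hf hi)
          rw [negMulLog_eq_neg]
          nlinarith

lemma negMulLog_sum_of_subsingleton {ι : Type*} (s : Finset ι) (f : ι → ℝ)
    (hf : ∀ i ∈ s, ∀ j ∈ s, f i ≠ 0 → f j ≠ 0 → i = j) :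
    negMulLog (∑ i ∈ s, f i) = ∑ i ∈ s, negMulLog (f i) := by
  by_cases h : ∃ i ∈ s, f i ≠ 0
  · obtain ⟨i, hi, hfi⟩ := h
    have hzero : ∀ j ∈ s, j ≠ i → f j = 0 := fun j hj hji => by
      by_contra hfj; exact hji (hf j hj i hi hfj hfi)
    rw [sum_eq_single_of_mem i hi hzero,
      sum_eq_single_of_mem i hi fun j hj hji => by rw [hzero j hj hji, negMulLog_zero]]
  · push Not at h
    rw [sum_eq_zero h, negMulLog_zero, sum_eq_zero fun i hi => by rw [h i hi, negMulLog_zero]]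

end Entropy

section Marginals

lemma funSplitAt_symm_eq_insertAt (l : Fin n) (i : Fin d) (g : {m : Fin n // m ≠ l} → Fin d) :
    (Equiv.funSplitAt l (Fin d)).symm (i, g) = insertAt l i g := by
  ext m; simp [insertAt, Equiv.funSplitAt, Equiv.piSplitAt]

lemma sum_insertAt {M : Type*} [AddCommMonoid M] (l : Fin n) (f : Idx n d → M) :
    ∑ x, f x = ∑ i : Fin d, ∑ g : {m : Fin n // m ≠ l} → Fin d, f (insertAt l i g) := by
  rw [← (Equiv.funSplitAt l (Fin d)).symm.sum_comp, Fintype.sum_prod_type]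
  simp only [funSplitAt_symm_eq_insertAt]

lemma margAt_eq_sum_insertAt (p : Idx n d → ℝ) (l : Fin n) (i : Fin d) :
    margAt p l i = ∑ g : {m : Fin n // m ≠ l} → Fin d, p (insertAt l i g) := by
  rw [margAt, sum_insertAt l, sum_eq_single_of_mem i (mem_univ _)]
  · simp [insertAt]
  · intro j _ hji
    simp [insertAt, hji]

lemma sum_val_insertAt (l : Fin n) (i : Fin d) (g : {m : Fin n // m ≠ l} → Fin d) :
    ∑ m, (insertAt l i g m : ℕ) = i + ∑ m, (g m : ℕ) := by
  have hne : ∀ m : {m : Fin n // m ≠ l}, (m : Fin n) ≠ l := fun m => m.2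
  rw [Fintype.sum_eq_add_sum_subtype_ne _ l]
  simp [insertAt, hne]

lemma shannon_margRest_le (p : Idx n d → ℝ) (hp : ∀ x, 0 ≤ p x) (l : Fin n) :
    shannon (margRest p l) ≤ shannon p := by
  rw [shannon_eq_sum_negMulLog, shannon_eq_sum_negMulLog, sum_insertAt l, sum_comm]
  gcongr with g
  exact negMulLog_sum_le _ _ fun i _ => hp _

lemma shannon_margRest_eq_of_determined (p : Idx n d → ℝ) (l : Fin n)
    (hp : ∀ g i j, p (insertAt l i g) ≠ 0 → p (insertAt l j g) ≠ 0 → i = j) :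
    shannon (margRest p l) = shannon p := by
  rw [shannon_eq_sum_negMulLog, shannon_eq_sum_negMulLog, sum_insertAt l, sum_comm]
  congr 1
  exact sum_congr rfl fun g _ =>
    negMulLog_sum_of_subsingleton _ _ fun i _ j _ => hp g i j

end Marginals

section MutualInfo

lemma mutualInfo_le_logb (p : Idx n d → ℝ) (hp : ∀ x, 0 ≤ p x) (hsum : ∑ x, p x = 1)
    (l : Fin n) : mutualInfo p l ≤ logb 2 d := by
  have hmarg : shannon (margAt p l) ≤ logb 2 d := by
    simpa using shannon_le_logb_card (margAt p l)
      (fun i => sum_nonneg fun x _ => by split_ifs <;> simp [hp])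
      (by simp_rw [margAt_eq_sum_insertAt]; rw [← sum_insertAt, hsum])
  have := shannon_margRest_le p hp l
  rw [mutualInfo]
  linarith

lemma mutualInfo_eq_logb_of_determined (p : Idx n d → ℝ) (l : Fin n)
    (hmarg : ∀ i, margAt p l i = (d : ℝ)⁻¹)
    (hdet : ∀ g i j, p (insertAt l i g) ≠ 0 → p (insertAt l j g) ≠ 0 → i = j) :
    mutualInfo p l = logb 2 d := by
  rw [mutualInfo, shannon_margRest_eq_of_determined p l hdet, funext hmarg]
  simpa using shannon_const_inv_card (α := Fin d)

end MutualInfo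

section Measurement

lemma tensorN_mul (A C : Fin n → Matrix (Fin d) (Fin d) ℂ) :
    tensorN A * tensorN C = tensorN fun l => A l * C l := by
  ext x z
  simp only [tensorN, Matrix.mul_apply, Matrix.of_apply, ← prod_mul_distrib]
  exact (Fintype.prod_sum fun l j => A l (x l) j * C l j (z l)).symm

lemma conjTranspose_tensorN (A : Fin n → Matrix (Fin d) (Fin d) ℂ) :
    (tensorN A)ᴴ = tensorN fun l => (A l)ᴴ := by
  ext x y
  simp [tensorN, Matrix.conjTranspose_apply]

lemma tensorN_one : tensorN (fun _ : Fin n => (1 : Matrix (Fin d) (Fin d) ℂ)) = 1 := by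
  ext x y
  simp [tensorN, Matrix.one_apply, prod_boole, funext_iff]

def braMatrix (B : Fin d → Fin d → ℂ) : Matrix (Fin d) (Fin d) ℂ :=
  Matrix.of fun i x => star (B i x)

lemma IsONB.conjTranspose_mul_braMatrix {B : Fin d → Fin d → ℂ} (hB : IsONB B) :
    (braMatrix B)ᴴ * braMatrix B = 1 := by
  rw [mul_eq_one_comm]
  ext i j
  simpa [braMatrix, Matrix.mul_apply, Matrix.one_apply] using hB i j

lemma braMatrix_stdBasis : braMatrix (stdBasis d) = 1 := by
  ext i x
  simp [braMatrix, stdBasis, Matrix.one_apply, eq_comm]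

lemma sum_normSq_mulVec {ι : Type*} [Fintype ι] [DecidableEq ι] (M : Matrix ι ι ℂ) (hM : Mᴴ * M = 1)
    (v : ι → ℂ) : ∑ i, Complex.normSq ((M *ᵥ v) i) = ∑ x, Complex.normSq (v x) := by
  suffices h : star (M *ᵥ v) ⬝ᵥ (M *ᵥ v) = star v ⬝ᵥ v by
    simpa [dotProduct, ← Complex.normSq_eq_conj_mul_self] using congrArg Complex.re h
  rw [Matrix.star_mulVec, ← Matrix.dotProduct_mulVec, Matrix.mulVec_mulVec, hM,
    Matrix.one_mulVec]

lemma jointProb_proj (ψ : Idx n d → ℂ) (B : Fin n → Fin d → Fin d → ℂ) (i : Idx n d) :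
    jointProb (proj ψ) B i = Complex.normSq ((tensorN (fun l => braMatrix (B l)) *ᵥ ψ) i) := by
  rw [jointProb, ← Complex.ofReal_re (Complex.normSq _), ← Complex.mul_conj]
  simp only [Matrix.mulVec, dotProduct, tensorN, braMatrix, Matrix.of_apply, map_sum,
    sum_mul_sum]
  congr 1
  refine sum_congr rfl fun x _ => sum_congr rfl fun y _ => ?_
  simp [proj, map_prod]
  ring

lemma sum_jointProb_proj (ψ : Idx n d → ℂ) (B : Fin n → Fin d → Fin d → ℂ)
    (hB : ∀ l, IsONB (B l)) : ∑ i, jointProb (proj ψ) B i = ∑ x, Complex.normSq (ψ x) := by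
  simp_rw [jointProb_proj]
  refine sum_normSq_mulVec _ ?_ ψ
  rw [conjTranspose_tensorN, tensorN_mul]
  simp_rw [(hB _).conjTranspose_mul_braMatrix, tensorN_one]

lemma jointProb_proj_stdBasis (ψ : Idx n d → ℂ) (i : Idx n d) :
    jointProb (proj ψ) (fun _ => stdBasis d) i = Complex.normSq (ψ i) := by
  rw [jointProb_proj, braMatrix_stdBasis, tensorN_one, Matrix.one_mulVec]

end Measurement

section CorrelationFunction

variable {N : ℕ}

lemma CNval_le_of_forall_le (ρ : Matrix (Idx n d) (Idx n d) ℂ)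
    (B : Fin N → Fin n → Fin d → Fin d → ℂ) (v : ℝ) (hn : n ≠ 0) (hN : N ≠ 0)
    (h : ∀ k l, mutualInfo (jointProb ρ (B k)) l ≤ v) : CNval N ρ B ≤ v := by
  calc CNval N ρ B ≤ 1 / (n * N) * ∑ _k : Fin N, ∑ _l : Fin n, v := by
        rw [CNval]; gcongr with k _ l _; exact h k l
    _ = v := by
        simp only [sum_const, card_univ, Fintype.card_fin, nsmul_eq_mul]
        field_simp

lemma CNval_eq_of_forall_eq (ρ : Matrix (Idx n d) (Idx n d) ℂ)
    (B : Fin N → Fin n → Fin d → Fin d → ℂ) (v : ℝ) (hn : n ≠ 0) (hN : N ≠ 0)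
    (h : ∀ k l, mutualInfo (jointProb ρ (B k)) l = v) : CNval N ρ B = v := by
  simp only [CNval, h, sum_const, card_univ, Fintype.card_fin, nsmul_eq_mul]
  field_simp

lemma CNval_proj_le_logb (ψ : Idx n d → ℂ) (hψ : ∑ x, Complex.normSq (ψ x) = 1)
    (B : Fin N → Fin n → Fin d → Fin d → ℂ) (hB : ∀ k l, IsONB (B k l)) (hn : n ≠ 0)
    (hN : N ≠ 0) : CNval N (proj ψ) B ≤ logb 2 d :=
  CNval_le_of_forall_le _ _ _ hn hN fun k l =>
    mutualInfo_le_logb _ (fun x => by rw [jointProb_proj]; exact Complex.normSq_nonneg _)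
      (by rw [sum_jointProb_proj _ _ (hB k), hψ]) l

end CorrelationFunction

section Fourier

lemma isPrimitiveRoot_ω (hd : d ≠ 0) : IsPrimitiveRoot (ω d) d :=
  Complex.isPrimitiveRoot_exp d hd

lemma ω_pow_self : ω d ^ d = 1 := by
  rcases eq_or_ne d 0 with rfl | hd
  · exact pow_zero _
  · exact (isPrimitiveRoot_ω hd).pow_eq_one

lemma norm_ω_pow (hd : d ≠ 0) (k : ℕ) : ‖ω d ^ k‖ = 1 := by
  rw [norm_pow, (isPrimitiveRoot_ω hd).norm'_eq_one hd, one_pow]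

lemma star_ω_pow (hd : d ≠ 0) (k : ℕ) : star (ω d ^ k) = (ω d ^ k)⁻¹ :=
  (Complex.inv_eq_conj (norm_ω_pow hd k)).symm

lemma sum_fin_pow_of_pow_eq_one {z : ℂ} (hz : z ^ d = 1) :
    ∑ j : Fin d, z ^ (j : ℕ) = if z = 1 then (d : ℂ) else 0 := by
  rw [Fin.sum_univ_eq_sum_range (z ^ ·)]
  split_ifs with h
  · simp [h]
  · rw [geom_sum_eq h, hz, sub_self, zero_div]

lemma ofReal_inv_sqrt_sq : ((((√(d : ℝ))⁻¹ : ℝ) : ℂ)) ^ 2 = (d : ℂ)⁻¹ := by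
  rw [← Complex.ofReal_pow, inv_pow, Real.sq_sqrt (Nat.cast_nonneg d)]
  push_cast; rfl

lemma norm_fourierBasis_sq (hd : d ≠ 0) (i x : Fin d) : ‖fourierBasis d i x‖ ^ 2 = (d : ℝ)⁻¹ := by
  rw [fourierBasis, norm_mul, norm_ω_pow hd, mul_one, Complex.norm_real, Real.norm_eq_abs, sq_abs,
    inv_pow, Real.sq_sqrt (Nat.cast_nonneg d)]

lemma star_fourierBasis (hd : d ≠ 0) (a j : Fin d) :
    star (fourierBasis d a j) = (((√(d : ℝ))⁻¹ : ℝ) : ℂ) * ((ω d ^ (a : ℕ))⁻¹) ^ (j : ℕ) := by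
  rw [fourierBasis, star_mul', star_ω_pow hd, Complex.star_def, Complex.conj_ofReal, pow_mul,
    inv_pow]

lemma star_fourierBasis_mul (hd : d ≠ 0) (i j x : Fin d) :
    star (fourierBasis d i x) * fourierBasis d j x =
      (d : ℂ)⁻¹ * ((ω d ^ (i : ℕ))⁻¹ * ω d ^ (j : ℕ)) ^ (x : ℕ) := by
  rw [star_fourierBasis hd, fourierBasis, pow_mul, ← ofReal_inv_sqrt_sq]
  ring

lemma fourierBasis_isONB [NeZero d] : IsONB (fourierBasis d) := by
  have hd := NeZero.ne d
  intro i j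
  have hpow : ((ω d ^ (i : ℕ))⁻¹ * ω d ^ (j : ℕ)) ^ d = 1 := by
    rw [mul_pow, inv_pow, ← pow_mul, ← pow_mul, mul_comm _ d, mul_comm _ d, pow_mul, pow_mul,
      ω_pow_self, one_pow, one_pow, inv_one, one_mul]
  simp_rw [starRingEnd_apply, star_fourierBasis_mul hd]
  rw [← mul_sum, sum_fin_pow_of_pow_eq_one hpow]
  have hinj : ω d ^ (i : ℕ) = ω d ^ (j : ℕ) ↔ i = j :=
    ⟨fun h => Fin.ext ((isPrimitiveRoot_ω hd).pow_inj i.isLt j.isLt h), by rintro rfl; rfl⟩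
  simp only [inv_mul_eq_one₀ (pow_ne_zero _ ((isPrimitiveRoot_ω hd).ne_zero hd)), hinj]
  split_ifs <;> simp [hd]

lemma stdBasis_isONB : IsONB (stdBasis d) := by
  intro i j
  simp [stdBasis, eq_comm]

lemma stdBasis_fourierBasis_mutUnbiased [NeZero d] :
    MutUnbiased (stdBasis d) (fourierBasis d) := by
  intro i j
  simp [stdBasis, norm_fourierBasis_sq (NeZero.ne d)]

lemma fourierBasis_stdBasis_mutUnbiased [NeZero d] :
    MutUnbiased (fourierBasis d) (stdBasis d) := by
  intro i j
  simp [stdBasis, norm_fourierBasis_sq (NeZero.ne d)]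

end Fourier

section LocalOperators

lemma applyLocal_of_perm (A : Fin n → Matrix (Fin d) (Fin d) ℂ) (σ : Fin n → Equiv.Perm (Fin d))
    (hA : ∀ l a b, A l a b = if a = σ l b then 1 else 0) (ψ : Idx n d → ℂ) (x : Idx n d) :
    applyLocal A ψ x = ψ fun l => (σ l).symm (x l) := by
  have hprod : ∀ y : Idx n d,
      ∏ l, A l (x l) (y l) = if (fun l => (σ l).symm (x l)) = y then 1 else 0 := by
    intro y
    simp only [hA, prod_boole, mem_univ, true_implies, funext_iff, Equiv.symm_apply_eq]
  simp [applyLocal, hprod]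

lemma applyLocal_diagonal (f : Fin n → Fin d → ℂ) (ψ : Idx n d → ℂ) (x : Idx n d) :
    applyLocal (fun l => Matrix.diagonal (f l)) ψ x = (∏ l, f l (x l)) * ψ x := by
  have hprod : ∀ y : Idx n d, ∏ l, Matrix.diagonal (f l) (x l) (y l) =
      if x = y then ∏ l, f l (x l) else 0 := by
    intro y
    simp only [Matrix.diagonal_apply, prod_ite_zero, mem_univ, true_implies, funext_iff]
  simp [applyLocal, hprod]

lemma Xmat_apply (a b : Fin d) : Xmat d a b = if a = finRotate d b then 1 else 0 := by
  cases d with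
  | zero => exact b.elim0
  | succ k => simp [Xmat, Fin.ext_iff, Fin.val_add]

lemma Zmat_pow (k : ℕ) : Zmat d ^ k = Matrix.diagonal fun i : Fin d => ω d ^ ((i : ℕ) * k) := by
  rw [show Zmat d = Matrix.diagonal fun i : Fin d => ω d ^ (i : ℕ) from rfl, Matrix.diagonal_pow]
  simp [pow_mul]

end LocalOperators

section GHZ

lemma sum_ite_forall_eq [NeZero n] {M : Type*} [AddCommMonoid M] (f : Idx n d → M) :
    ∑ x : Idx n d, (if ∀ l l', x l = x l' then f x else 0) = ∑ j, f fun _ => j := by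
  rw [← sum_filter,
    ← sum_image (g := fun (j : Fin d) (_ : Fin n) => j) fun j _ k _ h => congrFun h 0]
  congr 1
  ext x
  simp only [mem_filter, mem_univ, true_and, mem_image, funext_iff]
  exact ⟨fun h => ⟨x 0, fun l => h 0 l⟩, fun ⟨j, hj⟩ l l' => (hj l).symm.trans (hj l')⟩

lemma GHZvec_comp {σ : Fin d → Fin d} (hσ : σ.Injective) (x : Idx n d) :
    GHZvec d n (σ ∘ x) = GHZvec d n x := by
  simp [GHZvec, hσ.eq_iff]

lemma normSq_GHZvec (x : Idx n d) :
    Complex.normSq (GHZvec d n x) = if ∀ l l', x l = x l' then (d : ℝ)⁻¹ else 0 := by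
  unfold GHZvec
  split_ifs <;> simp

lemma sum_normSq_GHZvec [NeZero n] [NeZero d] : ∑ x, Complex.normSq (GHZvec d n x) = 1 := by
  simp_rw [normSq_GHZvec, sum_ite_forall_eq fun _ => (d : ℝ)⁻¹]
  simp [NeZero.ne d]

lemma sum_mul_GHZvec [NeZero n] (f : Idx n d → ℂ) :
    ∑ x, f x * GHZvec d n x = ((√(d : ℝ))⁻¹ : ℝ) * ∑ j, f fun _ => j := by
  simp_rw [GHZvec, mul_ite, mul_zero, sum_ite_forall_eq, mul_sum, mul_comm]

lemma applyLocal_Xmat_GHZvec :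
    applyLocal (fun _ : Fin n => Xmat d) (GHZvec d n) = GHZvec d n := by
  funext x
  rw [applyLocal_of_perm _ (fun _ => finRotate d) (fun _ => Xmat_apply)]
  exact GHZvec_comp (finRotate d).symm.injective x

lemma applyLocal_Zmat_pow_GHZvec (k : Fin n → ℕ) (hk : d ∣ ∑ l, k l) :
    applyLocal (fun l => Zmat d ^ k l) (GHZvec d n) = GHZvec d n := by
  funext x
  simp_rw [Zmat_pow, applyLocal_diagonal]
  by_cases hx : ∀ l l', x l = x l'
  · rcases isEmpty_or_nonempty (Fin n) with hn | ⟨⟨l₀⟩⟩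
    · simp
    obtain ⟨c, hc⟩ := hk
    rw [prod_congr rfl fun l _ => by rw [hx l l₀], prod_pow_eq_pow_sum, ← mul_sum, hc,
      mul_left_comm, pow_mul, ω_pow_self, one_pow, one_mul]
  · simp [GHZvec, hx]

end GHZ

section Counting

variable [NeZero d]

lemma Fin.dvd_val_add_iff (a : Fin d) (c : ℕ) : d ∣ (a : ℕ) + c ↔ a = -Fin.ofNat d c := by
  rw [eq_neg_iff_add_eq_zero, Fin.ext_iff, Fin.val_add, Fin.val_ofNat, Fin.val_zero,
    Nat.add_mod_mod, Nat.dvd_iff_mod_eq_zero]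

lemma card_filter_dvd_add_sum {β : Type*} [Fintype β] [DecidableEq β] (b₀ : β) (c : ℕ) :
    #{g : β → Fin d | d ∣ c + ∑ b, (g b : ℕ)} = d ^ (Fintype.card β - 1) := by
  have hsplit : ∀ a (h : {b // b ≠ b₀} → Fin d),
      c + ∑ b, (((Equiv.funSplitAt b₀ (Fin d)).symm (a, h) b : Fin d) : ℕ) =
        a + (c + ∑ b, (h b : ℕ)) := by
    intro a h
    have hne : ∀ b : {b // b ≠ b₀}, (b : β) ≠ b₀ := fun b => b.2
    rw [Fintype.sum_eq_add_sum_subtype_ne _ b₀]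
    simp [Equiv.funSplitAt, Equiv.piSplitAt, hne]
    ring
  rw [card_filter, ← (Equiv.funSplitAt b₀ (Fin d)).symm.sum_comp, Fintype.sum_prod_type, sum_comm]
  simp_rw [hsplit, Fin.dvd_val_add_iff, sum_ite_eq', mem_univ, if_true, sum_const, card_univ]
  simp

end Counting

section GHZComputational

lemma margAt_GHZvec_stdBasis [NeZero n] (l : Fin n) (i : Fin d) :
    margAt (jointProb (proj (GHZvec d n)) (fun _ => stdBasis d)) l i = (d : ℝ)⁻¹ := by
  have h : ∀ x : Idx n d,
      (if x l = i then jointProb (proj (GHZvec d n)) (fun _ => stdBasis d) x else 0) =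
        if ∀ l l', x l = x l' then (if x l = i then (d : ℝ)⁻¹ else 0) else 0 := by
    intro x
    rw [jointProb_proj_stdBasis, normSq_GHZvec]
    split_ifs <;> rfl
  simp_rw [margAt, h, sum_ite_forall_eq, sum_ite_eq', mem_univ, if_true]

lemma mutualInfo_GHZvec_stdBasis (hn : 2 ≤ n) (l : Fin n) :
    mutualInfo (jointProb (proj (GHZvec d n)) (fun _ => stdBasis d)) l = logb 2 d := by
  have : NeZero n := ⟨by omega⟩
  have : Nontrivial (Fin n) := Fin.nontrivial_iff_two_le.2 hn
  obtain ⟨m, hm⟩ := exists_ne l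
  refine mutualInfo_eq_logb_of_determined _ l (margAt_GHZvec_stdBasis l) fun g i j hi hj => ?_
  have hval : ∀ k, jointProb (proj (GHZvec d n)) (fun _ => stdBasis d) (insertAt l k g) ≠ 0 →
      k = g ⟨m, hm⟩ := by
    intro k hk
    rw [jointProb_proj_stdBasis, normSq_GHZvec] at hk
    split_ifs at hk with hconst
    · simpa [insertAt, hm] using hconst l m
    · exact absurd rfl hk
  exact (hval i hi).trans (hval j hj).symm

end GHZComputational

section GHZFourier

lemma mulVec_GHZvec_fourierBasis [NeZero n] [NeZero d] (x : Idx n d) :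
    (tensorN (fun _ => braMatrix (fourierBasis d)) *ᵥ GHZvec d n) x =
      ((if d ∣ ∑ l, (x l : ℕ) then ((√(d : ℝ))⁻¹) ^ (n + 1) * d else 0 : ℝ) : ℂ) := by
  have hd := NeZero.ne d
  set z := (ω d ^ ∑ l, (x l : ℕ))⁻¹
  have hz : z ^ d = 1 := by
    rw [inv_pow, ← pow_mul, mul_comm, pow_mul, ω_pow_self, one_pow, inv_one]
  have hz1 : z = 1 ↔ d ∣ ∑ l, (x l : ℕ) := by
    rw [inv_eq_one, (isPrimitiveRoot_ω hd).pow_eq_one_iff_dvd]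
  have hprod : ∀ j : Fin d, ∏ l, star (fourierBasis d (x l) j) =
      (((√(d : ℝ))⁻¹ : ℝ) : ℂ) ^ n * z ^ (j : ℕ) := by
    intro j
    simp_rw [star_fourierBasis hd, prod_mul_distrib, prod_const, card_univ, Fintype.card_fin,
      prod_pow, prod_inv_distrib, prod_pow_eq_pow_sum, z]
  simp only [Matrix.mulVec, dotProduct, tensorN, braMatrix, Matrix.of_apply, sum_mul_GHZvec,
    hprod, ← mul_sum, sum_fin_pow_of_pow_eq_one hz, hz1]
  split_ifs <;> push_cast <;> ring

lemma jointProb_GHZvec_fourierBasis [NeZero n] [NeZero d] (x : Idx n d) :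
    jointProb (proj (GHZvec d n)) (fun _ => fourierBasis d) x =
      if d ∣ ∑ l, (x l : ℕ) then ((d : ℝ) ^ (n - 1))⁻¹ else 0 := by
  rw [jointProb_proj, mulVec_GHZvec_fourierBasis, Complex.normSq_ofReal]
  split_ifs
  · obtain ⟨m, rfl⟩ := Nat.exists_eq_add_one.2 (NeZero.pos n)
    have hd : (d : ℝ) ≠ 0 := Nat.cast_ne_zero.2 (NeZero.ne d)
    have hs : ((√(d : ℝ))⁻¹) ^ 2 = (d : ℝ)⁻¹ := by rw [inv_pow, Real.sq_sqrt (Nat.cast_nonneg d)]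
    rw [Nat.add_sub_cancel, ← pow_two, mul_pow, ← pow_mul, pow_mul', hs, inv_pow]
    field_simp
    ring
  · simp

lemma margAt_GHZvec_fourierBasis [NeZero d] (hn : 2 ≤ n) (l : Fin n) (i : Fin d) :
    margAt (jointProb (proj (GHZvec d n)) (fun _ => fourierBasis d)) l i = (d : ℝ)⁻¹ := by
  have : NeZero n := ⟨by omega⟩
  have : Nontrivial (Fin n) := Fin.nontrivial_iff_two_le.2 hn
  obtain ⟨m, hm⟩ := exists_ne l
  simp_rw [margAt_eq_sum_insertAt, jointProb_GHZvec_fourierBasis, sum_val_insertAt]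
  rw [← sum_filter, sum_const, card_filter_dvd_add_sum ⟨m, hm⟩]
  obtain ⟨k, rfl⟩ := Nat.exists_eq_add_of_le' hn
  have hd : (d : ℝ) ≠ 0 := Nat.cast_ne_zero.2 (NeZero.ne d)
  simp [Fintype.card_subtype_compl, pow_succ]
  field_simp

lemma mutualInfo_GHZvec_fourierBasis [NeZero d] (hn : 2 ≤ n) (l : Fin n) :
    mutualInfo (jointProb (proj (GHZvec d n)) (fun _ => fourierBasis d)) l = logb 2 d := by
  have : NeZero n := ⟨by omega⟩
  refine mutualInfo_eq_logb_of_determined _ l (margAt_GHZvec_fourierBasis hn l)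
    fun g i j hi hj => ?_
  have hval : ∀ k, jointProb (proj (GHZvec d n)) (fun _ => fourierBasis d) (insertAt l k g) ≠ 0 →
      k = -Fin.ofNat d (∑ m, (g m : ℕ)) := by
    intro k hk
    rw [jointProb_GHZvec_fourierBasis, sum_val_insertAt] at hk
    split_ifs at hk with hdvd
    · exact (Fin.dvd_val_add_iff _ _).1 hdvd
    · exact absurd rfl hk
  exact (hval i hi).trans (hval j hj).symm

end GHZFourier

section MaximalCorrelation

lemma validMUBs_stdBasis_fourierBasis [NeZero d] :
    ValidMUBs 2 fun k (_ : Fin n) => if k = (0 : Fin 2) then stdBasis d else fourierBasis d := by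
  refine ⟨fun k _ => ?_, fun _ k k' hkk' => ?_⟩
  · fin_cases k
    · exact stdBasis_isONB
    · exact fourierBasis_isONB
  · fin_cases k <;> fin_cases k'
    · exact absurd rfl hkk'
    · exact stdBasis_fourierBasis_mutUnbiased
    · exact fourierBasis_stdBasis_mutUnbiased
    · exact absurd rfl hkk'

lemma CNval_GHZvec_stdBasis_fourierBasis [NeZero d] (hn : 2 ≤ n) :
    CNval 2 (proj (GHZvec d n))
      (fun k _ => if k = (0 : Fin 2) then stdBasis d else fourierBasis d) = logb 2 d := by
  refine CNval_eq_of_forall_eq _ _ _ (by omega) two_ne_zero fun k l => ?_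
  fin_cases k
  · exact mutualInfo_GHZvec_stdBasis hn l
  · exact mutualInfo_GHZvec_fourierBasis hn l

end MaximalCorrelation

/-- The tripartite generalized GHZ state is invariant under `X_d^{⊗3}` and under
`Z_d^{d-2} ⊗ Z_d ⊗ Z_d`, and maximizes `𝒞₂`, the maximum being attained by measuring
every subsystem in the computational basis and in the Fourier basis. -/
theorem GHZ3_maximizes_C2 (d : ℕ) (hd : 2 ≤ d) :
    applyLocal (fun _ : Fin 3 => Xmat d) (GHZvec d 3) = GHZvec d 3 ∧
    applyLocal ![Zmat d ^ (d - 2), Zmat d, Zmat d] (GHZvec d 3) = GHZvec d 3 ∧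
    IsGreatest (CNvalues 2 (proj (GHZvec d 3))) (Real.logb 2 d) ∧
    CNval 2 (proj (GHZvec d 3))
      (fun k _ => if k = (0 : Fin 2) then stdBasis d else fourierBasis d)
      = Real.logb 2 d := by
  have : NeZero d := ⟨by omega⟩
  have hZ : ![Zmat d ^ (d - 2), Zmat d, Zmat d] = fun l => Zmat d ^ ![d - 2, 1, 1] l := by
    ext1 l
    fin_cases l <;> simp
  have hattained := CNval_GHZvec_stdBasis_fourierBasis (d := d) (n := 3) (by norm_num)
  refine ⟨applyLocal_Xmat_GHZvec, ?_, ⟨⟨_, validMUBs_stdBasis_fourierBasis, hattained.symm⟩, ?_⟩,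
    hattained⟩
  · rw [hZ]
    exact applyLocal_Zmat_pow_GHZvec _ ⟨1, by simp [Fin.sum_univ_three]; omega⟩
  · rintro _ ⟨B, hB, rfl⟩
    exact CNval_proj_le_logb _ sum_normSq_GHZvec B hB.1 three_ne_zero two_ne_zero

end
end Paper
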